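/- For n ∈ {1, 2, 3}, any unital C*-algebra generated by the entries of an n × n magic unitary is commutative. -/

import Mathlib

/-!
Two entries in a common row (or column) of a magic unitary add up to `1` minus at most one
further projection, so their sum is idempotent; idempotents with idempotent sum anticommute and
are therefore orthogonal. Now let `x = u i j`, `y = u k l` with `i ≠ k`, `j ≠ l`, and let `m`
be the third column. In `x * y = ∑ₘ' x * y * u i m'` the term `m' = l` vanishes by orthogonality
in column `l`, and `x * y * u i m` is the only term of `x * (∑ₚ u k p) * u i m = x * u i m = 0`
without an orthogonal pair. Hence `x * y * x = x * y`, whose adjoint reads `y * x = x * y`.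
Self-adjoint pairwise commuting generators generate a commutative algebra, and commutativity
survives taking the closure.
-/

open Finset

theorem IsIdempotentElem.mul_eq_zero_of_add_add_eq_one {R : Type*} [Ring R] [IsAddTorsionFree R]
    {p q r : R} (hp : IsIdempotentElem p) (hq : IsIdempotentElem q) (hr : IsIdempotentElem r)
    (h : p + q + r = 1) : p * q = 0 := by
  have hpq : IsIdempotentElem (p + q) := eq_sub_of_add_eq h ▸ hr.one_sub
  exact hp.mul_eq_zero_of_anticommute ((hp.add_iff hq).1 hpq)

theorem isIdempotentElem_sum_of_card_le_one {ι R : Type*} [NonUnitalNonAssocSemiring R]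
    {s : Finset ι} {f : ι → R} (hs : #s ≤ 1) (hf : ∀ i ∈ s, IsIdempotentElem (f i)) :
    IsIdempotentElem (∑ i ∈ s, f i) := by
  obtain hs | hs := Nat.le_one_iff_eq_zero_or_eq_one.mp hs
  · rw [card_eq_zero.mp hs, sum_empty]
    exact .zero
  · obtain ⟨a, rfl⟩ := card_eq_one.mp hs
    simpa using hf a

theorem IsSelfAdjoint.commute_of_mul_mul_self {R : Type*} [Semigroup R] [StarMul R] {x y : R}
    (hx : IsSelfAdjoint x) (hy : IsSelfAdjoint y) (h : x * y * x = x * y) : Commute x y := by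
  have hyx : y * x = x * y * x := by
    simpa [star_mul, hx.star_eq, hy.star_eq, mul_assoc] using congrArg star h.symm
  rw [Commute, SemiconjBy, hyx, h]

theorem eq_or_eq_or_eq_of_card_le_three {ι : Type*} [Fintype ι] (hι : Fintype.card ι ≤ 3)
    {j l m : ι} (hjl : j ≠ l) (hjm : j ≠ m) (hlm : l ≠ m) (p : ι) : p = j ∨ p = l ∨ p = m := by
  classical
  by_contra! hp
  have hcard := card_le_univ ({p, j, l, m} : Finset ι)
  rw [card_insert_of_notMem (by simp [hp.1, hp.2.1, hp.2.2]),
    card_insert_of_notMem (by simp [hjl, hjm]), card_pair hlm] at hcard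
  omega

theorem StarAlgebra.mul_comm_of_topologicalClosure_adjoin_eq_top {R A : Type*} [CommSemiring R]
    [StarRing R] [TopologicalSpace A] [Semiring A] [Algebra R A] [StarRing A] [StarModule R A]
    [IsSemitopologicalSemiring A] [ContinuousStar A] [T2Space A] {s : Set A}
    (hcomm : ∀ x ∈ s, ∀ y ∈ s, x * y = y * x)
    (hcomm_star : ∀ x ∈ s, ∀ y ∈ s, x * star y = star y * x)
    (hs : (adjoin R s).topologicalClosure = ⊤) (a b : A) : a * b = b * a := by
  have hle := StarSubalgebra.topologicalClosure_adjoin_le_centralizer_centralizer R s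
  rw [hs, top_le_iff] at hle
  have hmem : ∀ x : A, x ∈ (s ∪ star s).centralizer.centralizer := fun x => by
    rw [← StarSubalgebra.coe_centralizer_centralizer R s, hle]
    trivial
  have hunion := Set.union_star_self_comm (fun x hx y hy => hcomm y hy x hx)
    (fun x hx y hy => hcomm_star y hy x hx)
  exact Set.centralizer_centralizer_comm_of_comm (fun x hx y hy => hunion y hy x hx)
    a (hmem a) b (hmem b)

namespace Matrix

structure IsMagicUnitary {ι A : Type*} [Fintype ι] [Semiring A] [Star A] (u : Matrix ι ι A) :
    Prop where
  isStarProjection : ∀ i j, IsStarProjection (u i j)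
  sum_row : ∀ i, ∑ j, u i j = 1
  sum_col : ∀ j, ∑ i, u i j = 1

namespace IsMagicUnitary

variable {ι A : Type*} [Fintype ι] [Ring A] [StarRing A] {u : Matrix ι ι A}

theorem transpose (hu : u.IsMagicUnitary) : uᵀ.IsMagicUnitary :=
  ⟨fun i j => hu.isStarProjection j i, hu.sum_col, hu.sum_row⟩

variable [IsAddTorsionFree A]

theorem mul_eq_zero_same_row (hu : u.IsMagicUnitary) (hι : Fintype.card ι ≤ 3) (i : ι)
    {j l : ι} (hjl : j ≠ l) : u i j * u i l = 0 := by
  classical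
  have hsum : u i j + u i l + ∑ m ∈ {j, l}ᶜ, u i m = 1 := by
    rw [← sum_pair hjl, sum_add_sum_compl, hu.sum_row]
  have hrest : IsIdempotentElem (∑ m ∈ {j, l}ᶜ, u i m) :=
    isIdempotentElem_sum_of_card_le_one (by rw [card_compl, card_pair hjl]; omega)
      fun m _ => (hu.isStarProjection i m).isIdempotentElem
  exact (hu.isStarProjection i j).isIdempotentElem.mul_eq_zero_of_add_add_eq_one
    (hu.isStarProjection i l).isIdempotentElem hrest hsum

theorem mul_eq_zero_same_col (hu : u.IsMagicUnitary) (hι : Fintype.card ι ≤ 3) (j : ι)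
    {i k : ι} (hik : i ≠ k) : u i j * u k j = 0 :=
  hu.transpose.mul_eq_zero_same_row hι j hik

theorem mul_mul_eq_zero (hu : u.IsMagicUnitary) (hι : Fintype.card ι ≤ 3) {i k j l m : ι}
    (hik : i ≠ k) (hjl : j ≠ l) (hjm : j ≠ m) (hlm : l ≠ m) : u i j * u k l * u i m = 0 := by
  have hsum : ∑ p, u i j * u k p * u i m = 0 := by
    rw [← sum_mul, ← mul_sum, hu.sum_row, mul_one, hu.mul_eq_zero_same_row hι i hjm]
  rwa [sum_eq_single l _ (by simp)] at hsum
  intro p _ hpl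
  rcases eq_or_eq_or_eq_of_card_le_three hι hjl hjm hlm p with rfl | rfl | rfl
  · rw [hu.mul_eq_zero_same_col hι p hik, zero_mul]
  · exact absurd rfl hpl
  · rw [mul_assoc, hu.mul_eq_zero_same_col hι p hik.symm, mul_zero]

theorem mul_mul_self_of_ne (hu : u.IsMagicUnitary) (hι : Fintype.card ι ≤ 3) {i k j l : ι}
    (hik : i ≠ k) (hjl : j ≠ l) : u i j * u k l * u i j = u i j * u k l := by
  have hsum : ∑ m, u i j * u k l * u i m = u i j * u k l := by
    rw [← mul_sum, hu.sum_row, mul_one]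
  rwa [sum_eq_single j _ (by simp)] at hsum
  intro m _ hmj
  obtain rfl | hml := eq_or_ne m l
  · rw [mul_assoc, hu.mul_eq_zero_same_col hι m hik.symm, mul_zero]
  · exact hu.mul_mul_eq_zero hι hik hjl hmj.symm hml.symm

theorem commute (hu : u.IsMagicUnitary) (hι : Fintype.card ι ≤ 3) (i j k l : ι) :
    Commute (u i j) (u k l) := by
  obtain rfl | hik := eq_or_ne i k
  · obtain rfl | hjl := eq_or_ne j l
    · exact .refl _
    · exact (hu.mul_eq_zero_same_row hι i hjl).trans (hu.mul_eq_zero_same_row hι i hjl.symm).symm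
  · obtain rfl | hjl := eq_or_ne j l
    · exact (hu.mul_eq_zero_same_col hι j hik).trans (hu.mul_eq_zero_same_col hι j hik.symm).symm
    · exact (hu.isStarProjection i j).isSelfAdjoint.commute_of_mul_mul_self
        (hu.isStarProjection k l).isSelfAdjoint (hu.mul_mul_self_of_ne hι hik hjl)

end IsMagicUnitary

end Matrix

/-- For `n ≤ 3`, a unital C*-algebra generated by the entries of an `n × n`
magic unitary is commutative (`S_n⁺ = S_n` for `n ≤ 3`). -/
theorem magicUnitary_generated_algebra_commutative_of_le_three
    {A : Type*} [CStarAlgebra A] {n : ℕ} (hn : n = 1 ∨ n = 2 ∨ n = 3)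
    (u : Matrix (Fin n) (Fin n) A)
    (hsa : ∀ i j, IsSelfAdjoint (u i j))
    (hidem : ∀ i j, u i j * u i j = u i j)
    (hrow : ∀ i, ∑ j, u i j = 1)
    (hcol : ∀ j, ∑ i, u i j = 1)
    (hgen : (StarAlgebra.adjoin ℂ {x : A | ∃ i j, x = u i j}).topologicalClosure = ⊤) :
    ∀ a b : A, a * b = b * a := by
  have : IsAddTorsionFree A :=
    let _ : Module ℚ A := .compHom A (algebraMap ℚ ℂ)
    .of_module_rat A
  have hu : u.IsMagicUnitary := ⟨fun i j => ⟨hidem i j, hsa i j⟩, hrow, hcol⟩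
  have hcard : Fintype.card (Fin n) ≤ 3 := by rw [Fintype.card_fin]; omega
  refine StarAlgebra.mul_comm_of_topologicalClosure_adjoin_eq_top ?_ ?_ hgen
  · rintro _ ⟨i, j, rfl⟩ _ ⟨k, l, rfl⟩
    exact hu.commute hcard i j k l
  · rintro _ ⟨i, j, rfl⟩ _ ⟨k, l, rfl⟩
    rw [(hsa k l).star_eq]
    exact hu.commute hcard i j k l
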